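/- arXiv:1605.04821 — 2 statements merged into one kernel-verified Lean document; each statement's English description precedes it below -/
import Mathlib

section
/- Suppose b : ℝ^d → ℝ^d is β-Hölder continuous with constant L_b for some β ∈ (0,1], i.e. ‖b(x) − b(y)‖_∞ ≤ L_b·‖x − y‖_∞^β. Let x_i, x_l be points on a grid of width Δx with ‖x_l − x_i‖_∞ = M·Δx for some real M ≥ 0, and suppose ‖(x_l + Δx·b(x_l)) − (x_i + Δx·b(x_i))‖_∞ < 2Δx. Then M·(1 − L_b·M^{β−1}·Δx^β) < 2; in particular if β = 1 and L_b·Δx < 1/3 then M < 3, i.e. M ∈ {0, 1, 2}. -/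
/-- Counting estimate for the drift part of the LISL stencil: if `b` is `β`-Hölder
continuous (sup norm) with constant `L_b`, the grid points `x_i, x_l` satisfy
`‖x_l − x_i‖_∞ = M·Δx`, and their drift-shifted images are within distance `2Δx`,
then `M·(1 − L_b·M^{β−1}·Δx^β) < 2`; in particular for `β = 1` and `L_b·Δx < 1/3`
one has `M < 3`. -/
theorem stmt12 (d : ℕ) (β L_b : ℝ) (hβ : β ∈ Set.Ioc (0 : ℝ) 1) (hL : 0 ≤ L_b)
    (b : (Fin d → ℝ) → (Fin d → ℝ))
    (hb : ∀ x y, ‖b x - b y‖ ≤ L_b * ‖x - y‖ ^ β)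
    (Δx M : ℝ) (hΔx : 0 < Δx) (hM : 0 ≤ M)
    (xi xl : Fin d → ℝ)
    (hdist : ‖xl - xi‖ = M * Δx)
    (hclose : ‖(xl + Δx • b xl) - (xi + Δx • b xi)‖ < 2 * Δx) :
    M * (1 - L_b * M ^ (β - 1) * Δx ^ β) < 2 ∧
    (β = 1 → L_b * Δx < 1 / 3 → M < 3) := by
  have key : M * Δx < 2 * Δx + Δx * (L_b * (M * Δx) ^ β) := by
    have hsplit : xl - xi =
        ((xl + Δx • b xl) - (xi + Δx • b xi)) - Δx • (b xl - b xi) := by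
      module
    have htri : ‖xl - xi‖ ≤ ‖(xl + Δx • b xl) - (xi + Δx • b xi)‖ +
        ‖Δx • (b xl - b xi)‖ := by
      rw [hsplit]; exact norm_sub_le _ _
    have hn : ‖Δx • (b xl - b xi)‖ = Δx * ‖b xl - b xi‖ := by
      rw [norm_smul, Real.norm_eq_abs, abs_of_pos hΔx]
    have hbd : ‖b xl - b xi‖ ≤ L_b * (M * Δx) ^ β := by
      have := hb xl xi; rwa [hdist] at this
    calc M * Δx = ‖xl - xi‖ := hdist.symm
      _ ≤ ‖(xl + Δx • b xl) - (xi + Δx • b xi)‖ + Δx * ‖b xl - b xi‖ := by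
          rw [← hn]; exact htri
      _ < 2 * Δx + Δx * (L_b * (M * Δx) ^ β) := by
          have : Δx * ‖b xl - b xi‖ ≤ Δx * (L_b * (M * Δx) ^ β) :=
            mul_le_mul_of_nonneg_left hbd hΔx.le
          linarith
  have hMb : M < 2 + L_b * (M * Δx) ^ β := by
    have := (div_lt_div_iff_of_pos_right hΔx).mpr key
    nlinarith [key]
  have hmul : (M * Δx) ^ β = M ^ β * Δx ^ β := Real.mul_rpow hM hΔx.le
  constructor
  · rcases eq_or_lt_of_le hM with hM0 | hM0
    · rw [← hM0]; norm_num
    · have hpow : M * M ^ (β - 1) = M ^ β := by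
        have h := Real.rpow_add hM0 1 (β - 1)
        rw [Real.rpow_one] at h
        rw [← h]; norm_num
      have : M * (1 - L_b * M ^ (β - 1) * Δx ^ β)
          = M - L_b * (M * M ^ (β - 1)) * Δx ^ β := by ring
      rw [this, hpow]
      rw [hmul] at hMb
      linarith
  · intro hβ1 hLΔ
    rw [hβ1, Real.rpow_one] at hMb
    nlinarith
end

section
/- Suppose σ : ℝ^d → ℝ^d is η-Hölder continuous with constant L_σ for some η ∈ (1/2, 1]. Let x_i, x_l be grid points with ‖x_l − x_i‖_∞ = M·Δx, M ≥ 0 real, and suppose ‖(x_l + √(Δx)·σ(x_l)) − (x_i + √(Δx)·σ(x_i))‖_∞ < 2Δx. Then M·Δx − L_σ·Δx^{1/2 + η}·M^η < 2Δx, i.e. M·(1 − L_σ·M^{η−1}·Δx^{η − 1/2}) < 2; consequently for every ε > 0 there is Δx₀ > 0 such that Δx < Δx₀ implies M < 2 + ε. -/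
/-- Counting estimate for the diffusion part of the LISL stencil: if `σ` is `η`-Hölder
continuous (sup norm) with constant `L_σ` and `η ∈ (1/2, 1]`, then whenever two grid
points at distance `M·Δx` have `√Δx·σ`-shifted images within distance `2Δx`, the bound
`M·Δx − L_σ·Δx^{1/2+η}·M^η < 2Δx` holds; consequently for every `ε > 0` there is
`Δx₀ > 0` such that `Δx < Δx₀` forces `M < 2 + ε`. -/
theorem stmt13 (d : ℕ) (η L_σ : ℝ) (hη : η ∈ Set.Ioc (1 / 2 : ℝ) 1) (hL : 0 ≤ L_σ)
    (σ : (Fin d → ℝ) → (Fin d → ℝ))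
    (hσ : ∀ x y, ‖σ x - σ y‖ ≤ L_σ * ‖x - y‖ ^ η) :
    (∀ (Δx M : ℝ) (xi xl : Fin d → ℝ), 0 < Δx → 0 ≤ M →
      ‖xl - xi‖ = M * Δx →
      ‖(xl + Real.sqrt Δx • σ xl) - (xi + Real.sqrt Δx • σ xi)‖ < 2 * Δx →
      M * Δx - L_σ * Δx ^ (1 / 2 + η) * M ^ η < 2 * Δx) ∧
    (∀ ε : ℝ, 0 < ε → ∃ Δx₀ : ℝ, 0 < Δx₀ ∧
      ∀ (Δx M : ℝ) (xi xl : Fin d → ℝ), 0 < Δx → 0 ≤ M →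
        ‖xl - xi‖ = M * Δx →
        ‖(xl + Real.sqrt Δx • σ xl) - (xi + Real.sqrt Δx • σ xi)‖ < 2 * Δx →
        Δx < Δx₀ → M < 2 + ε) := by
  obtain ⟨hη1, hη2⟩ := hη
  have key : ∀ (Δx M : ℝ) (xi xl : Fin d → ℝ), 0 < Δx → 0 ≤ M →
      ‖xl - xi‖ = M * Δx →
      ‖(xl + Real.sqrt Δx • σ xl) - (xi + Real.sqrt Δx • σ xi)‖ < 2 * Δx →
      M * Δx - L_σ * Δx ^ (1 / 2 + η) * M ^ η < 2 * Δx := by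
    intro Δx M xi xl hΔx hM hnorm hlt
    set v := σ xl - σ xi with hv
    have h1 : (xl + Real.sqrt Δx • σ xl) - (xi + Real.sqrt Δx • σ xi)
        = (xl - xi) + Real.sqrt Δx • v := by
      rw [hv, smul_sub]; abel
    have h2 : ‖xl - xi‖ ≤ ‖(xl - xi) + Real.sqrt Δx • v‖ + ‖Real.sqrt Δx • v‖ := by
      have := norm_add_le ((xl - xi) + Real.sqrt Δx • v) (-(Real.sqrt Δx • v))
      simpa using this
    have h3 : ‖Real.sqrt Δx • v‖ ≤ L_σ * Δx ^ (1 / 2 + η) * M ^ η := by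
      have hs : ‖Real.sqrt Δx • v‖ = Real.sqrt Δx * ‖v‖ := by
        rw [norm_smul, Real.norm_eq_abs, abs_of_nonneg (Real.sqrt_nonneg _)]
      rw [hs]
      have hσ' : ‖v‖ ≤ L_σ * (M * Δx) ^ η := by
        have := hσ xl xi
        rwa [hnorm] at this
      calc Real.sqrt Δx * ‖v‖ ≤ Real.sqrt Δx * (L_σ * (M * Δx) ^ η) := by
            exact mul_le_mul_of_nonneg_left hσ' (Real.sqrt_nonneg _)
        _ = L_σ * Δx ^ (1 / 2 + η) * M ^ η := by
            rw [Real.sqrt_eq_rpow, Real.mul_rpow hM hΔx.le, Real.rpow_add hΔx]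
            ring
    rw [h1] at hlt
    rw [hnorm] at h2
    linarith
  refine ⟨key, ?_⟩
  intro ε hε
  have hp : 0 < η - 1 / 2 := by linarith
  set c := ε / (2 * (2 + ε) * (L_σ + 1)) with hc
  have hc0 : 0 < c := by positivity
  refine ⟨min 1 (c ^ (1 / (η - 1 / 2))), by positivity, ?_⟩
  intro Δx M xi xl hΔx hM hnorm hlt hΔx₀
  by_contra hM2
  push_neg at hM2
  have hkey := key Δx M xi xl hΔx hM hnorm hlt
  have hb : Δx ^ (η - 1 / 2) < c := by
    have h3 : Δx < c ^ (1 / (η - 1 / 2)) := lt_of_lt_of_le hΔx₀ (min_le_right _ _)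
    calc Δx ^ (η - 1 / 2) < (c ^ (1 / (η - 1 / 2))) ^ (η - 1 / 2) :=
          Real.rpow_lt_rpow hΔx.le h3 hp
      _ = c := by
          rw [← Real.rpow_mul hc0.le, one_div_mul_cancel hp.ne', Real.rpow_one]
  have hb0 : 0 ≤ Δx ^ (η - 1 / 2) := Real.rpow_nonneg hΔx.le _
  have hMη : M ^ η ≤ M := by
    have h1M : (1 : ℝ) ≤ M := by linarith
    calc M ^ η ≤ M ^ (1 : ℝ) := Real.rpow_le_rpow_of_exponent_le h1M hη2
      _ = M := Real.rpow_one M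
  have hMη0 : 0 ≤ M ^ η := Real.rpow_nonneg hM _
  have hsplit : Δx ^ (1 / 2 + η) = Δx * Δx ^ (η - 1 / 2) := by
    rw [show (1 / 2 + η : ℝ) = 1 + (η - 1 / 2) by ring, Real.rpow_add hΔx, Real.rpow_one]
  rw [hsplit] at hkey
  set b := Δx ^ (η - 1 / 2) with hbdef
  have h4 : M - L_σ * b * M ^ η < 2 := by
    have : (M - L_σ * b * M ^ η) * Δx < 2 * Δx := by nlinarith
    exact lt_of_mul_lt_mul_right (by linarith [this]) hΔx.le
  have hb' : b * (2 * (2 + ε) * (L_σ + 1)) < ε := by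
    rw [hc] at hb
    have hpos : 0 < 2 * (2 + ε) * (L_σ + 1) := by positivity
    exact (lt_div_iff₀ hpos).mp hb
  nlinarith [mul_nonneg (mul_nonneg hL hb0) (sub_nonneg.mpr hMη),
    mul_nonneg hb0 hε.le, mul_nonneg hL hb0, mul_le_mul_of_nonneg_left hMη (mul_nonneg hL hb0)]
end
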